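/- arXiv:1112.5331 — 3 statements merged into one kernel-verified Lean document; each statement's English description precedes it below -/
import Mathlib

section
/- Let a, b, x, y ∈ ℝ with x ≠ 0 and y ≠ 0. Suppose 3*x*y² + 3*x²*y + a*y = 0 and x³ - y³ + (3/2)*x²*y - (3/2)*x*y² + (a/2)*y + a*x + b = 0. Then x⁶ - b*x³ - a³/27 = 0. -/
theorem cubic_resolvent (a b x y : ℝ) (hx : x ≠ 0) (hy : y ≠ 0)
    (h1 : 3 * x * y ^ 2 + 3 * x ^ 2 * y + a * y = 0)
    (h2 : x ^ 3 - y ^ 3 + (3 / 2) * x ^ 2 * y - (3 / 2) * x * y ^ 2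
        + (a / 2) * y + a * x + b = 0) :
    x ^ 6 - b * x ^ 3 - a ^ 3 / 27 = 0 := by
  have hmul : y * (3 * x * y + 3 * x ^ 2 + a) = 0 := by linear_combination h1
  have h : 3 * x * y + 3 * x ^ 2 + a = 0 :=
    (mul_eq_zero.mp hmul).resolve_left hy
  linear_combination (-a ^ 2 / 27 + a * (x ^ 2 + x * y) / 9 + 2 * x ^ 4 / 3
      - x ^ 3 * y / 6 - x ^ 2 * y ^ 2 / 3) * h + (-x ^ 3) * h2
end

section
/- Let a, b, x ∈ ℝ with x ≠ 0 satisfy x⁶ - b*x³ - a³/27 = 0, and set y = -x - a/(3*x) and ω = (1 + i*√3)/2. Then z = x + ω*y satisfies z³ + a*z + b = 0 in ℂ. -/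
/-! Cardano: `z = u + v` with `u = (1 - ω) x`, `v = -ω a / (3 x)`. Since `ω² - ω + 1 = 0`, `ω` and
`1 - ω` are primitive sixth roots of unity with `ω (1 - ω) = 1`, so `3 u v = -a`, and
`u³ + v³ = -x³ + a³ / (27 x³) = -b` by the resolvent equation. -/

theorem cubic_root_of_cardano {R : Type*} [CommRing R] {a b u v : R}
    (huv : 3 * u * v = -a) (hcubes : u ^ 3 + v ^ 3 = -b) :
    (u + v) ^ 3 + a * (u + v) + b = 0 := by
  linear_combination hcubes + (u + v) * huv

theorem cubic_root_of_resolvent {K : Type*} [Field K] {a b x ω : K} (h3 : (3 : K) ≠ 0)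
    (hx : x ≠ 0) (h : x ^ 6 - b * x ^ 3 - a ^ 3 / 27 = 0) (hω : ω ^ 2 - ω + 1 = 0) :
    (x + ω * (-x - a / (3 * x))) ^ 3 + a * (x + ω * (-x - a / (3 * x))) + b = 0 := by
  have hω3 : ω ^ 3 = -1 := by linear_combination (ω + 1) * hω
  have hω3' : (1 - ω) ^ 3 = -1 := by linear_combination (2 - ω) * hω
  have ha3 : a ^ 3 / 27 = x ^ 6 - b * x ^ 3 := by linear_combination -h
  have hsum : x + ω * (-x - a / (3 * x)) = (1 - ω) * x + -ω * a / (3 * x) := by ring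
  rw [hsum]
  apply cubic_root_of_cardano
  · field_simp
    linear_combination a * hω
  · calc ((1 - ω) * x) ^ 3 + (-ω * a / (3 * x)) ^ 3
          = (1 - ω) ^ 3 * x ^ 3 - ω ^ 3 * (a ^ 3 / 27) / x ^ 3 := by
            simp only [div_pow, mul_pow, show (3 : K) ^ 3 = 27 by norm_num]; ring
      _ = -x ^ 3 + (x ^ 6 - b * x ^ 3) / x ^ 3 := by rw [hω3', hω3, ha3]; ring
      _ = -b := by field_simp; ring

theorem cubic_solution_from_resolvent (a b x : ℝ) (hx : x ≠ 0)
    (h : x ^ 6 - b * x ^ 3 - a ^ 3 / 27 = 0) :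
    ((x : ℂ) + (1 + Complex.I * Real.sqrt 3) / 2 * ((-x - a / (3 * x) : ℝ) : ℂ)) ^ 3
      + a * ((x : ℂ) + (1 + Complex.I * Real.sqrt 3) / 2 * ((-x - a / (3 * x) : ℝ) : ℂ)) + b
      = 0 := by
  have hω : ((1 + Complex.I * Real.sqrt 3) / 2) ^ 2 - (1 + Complex.I * Real.sqrt 3) / 2 + 1 = 0 := by
    have hsqrt : ((Real.sqrt 3 : ℝ) : ℂ) ^ 2 = 3 := by
      norm_cast
      exact Real.sq_sqrt (by norm_num)
    linear_combination (Real.sqrt 3 : ℂ) ^ 2 / 4 * Complex.I_sq - hsqrt / 4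
  push_cast
  exact cubic_root_of_resolvent three_ne_zero (by exact_mod_cast hx) (by exact_mod_cast h) hω
end

section
/- Let a, b, c, x, y ∈ ℝ with x ≠ 0 and y ≠ 0. Suppose 4*x³*y - 4*x*y³ + 2*a*x*y + b*y = 0 and x⁴ + y⁴ - 6*x²*y² + a*x² - a*y² + b*x + c = 0. Then x⁶ + (a/2)*x⁴ + (a²/16 - c/4)*x² - b²/64 = 0. -/
/-!
Dividing the imaginary part by `y` gives `4 x y² = 4 x³ + 2 a x + b`. Multiplying the real part
by `16 x²` turns its `y²` and `y⁴` terms into polynomials in `4 x y²`, and substituting the above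
eliminates `y`, leaving `-64` times the resolvent cubic in `x²`.
-/

theorem resolvent_eq_zero_of_re_im {K : Type*} [Field K] [CharZero K] {a b c x y : K}
    (h_im : 4 * x ^ 3 - 4 * x * y ^ 2 + 2 * a * x + b = 0)
    (h_re : x ^ 4 + y ^ 4 - 6 * x ^ 2 * y ^ 2 + a * x ^ 2 - a * y ^ 2 + b * x + c = 0) :
    x ^ 6 + (a / 2) * x ^ 4 + (a ^ 2 / 16 - c / 4) * x ^ 2 - b ^ 2 / 64 = 0 := by
  linear_combination (-x ^ 2 / 4) * h_re + ((20 * x ^ 3 - 4 * x * y ^ 2 + 2 * a * x - b) / 64) * h_im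

theorem quartic_resolvent_general (a b c x y : ℝ) (hy : y ≠ 0)
    (h1 : 4 * x ^ 3 * y - 4 * x * y ^ 3 + 2 * a * x * y + b * y = 0)
    (h2 : x ^ 4 + y ^ 4 - 6 * x ^ 2 * y ^ 2 + a * x ^ 2 - a * y ^ 2 + b * x + c = 0) :
    x ^ 6 + (a / 2) * x ^ 4 + (a ^ 2 / 16 - c / 4) * x ^ 2 - b ^ 2 / 64 = 0 := by
  have h_im : 4 * x ^ 3 - 4 * x * y ^ 2 + 2 * a * x + b = 0 :=
    mul_right_cancel₀ hy (by linear_combination h1)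
  exact resolvent_eq_zero_of_re_im h_im h2

theorem quartic_resolvent (a b c x y : ℝ) (hx : x ≠ 0) (hy : y ≠ 0)
    (h1 : 4 * x ^ 3 * y - 4 * x * y ^ 3 + 2 * a * x * y + b * y = 0)
    (h2 : x ^ 4 + y ^ 4 - 6 * x ^ 2 * y ^ 2 + a * x ^ 2 - a * y ^ 2 + b * x + c = 0) :
    x ^ 6 + (a / 2) * x ^ 4 + (a ^ 2 / 16 - c / 4) * x ^ 2 - b ^ 2 / 64 = 0 :=
  quartic_resolvent_general a b c x y hy h1 h2
end
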